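/- arXiv:1808.08785 — 2 statements merged into one kernel-verified Lean document; each statement's English description precedes it below -/
import Mathlib

section
/- Let Ξ : [0,1] → [0,1] and φ : [0,1] → ℝ satisfy x ∈ (Ξ(x) − φ(Ξ(x)), Ξ(x) + φ(Ξ(x))) for all x ∈ [0,1]. Define ζ : ℕ → ℝ by ζ(0) := Ξ(0) + φ(Ξ(0)) and ζ(n+1) := Ξ(ζ'(n)) + φ(Ξ(ζ'(n))) where ζ'(n) := min(ζ(n), 1). If there exists n₀ with ζ(n₀) ≥ 1, then the intervals I_{Ξ(0)}^φ, I_{Ξ(ζ'(0))}^φ, …, I_{Ξ(ζ'(n₀))}^φ cover [0,1], where I_y^φ := (y − φ(y), y + φ(y)). -/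
theorem sweep_gives_finite_subcover
    (Ξ : ℝ → ℝ) (φ : ℝ → ℝ)
    (hΞ : ∀ x ∈ Set.Icc (0:ℝ) 1, Ξ x ∈ Set.Icc (0:ℝ) 1)
    (hcov : ∀ x ∈ Set.Icc (0:ℝ) 1,
      x ∈ Set.Ioo (Ξ x - φ (Ξ x)) (Ξ x + φ (Ξ x)))
    (ζ : ℕ → ℝ)
    (hζ0 : ζ 0 = Ξ 0 + φ (Ξ 0))
    (hζS : ∀ n : ℕ, ζ (n + 1) = Ξ (min (ζ n) 1) + φ (Ξ (min (ζ n) 1)))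
    (n₀ : ℕ) (hn₀ : ζ n₀ ≥ 1) :
    Set.Icc (0:ℝ) 1 ⊆
      Set.Ioo (Ξ 0 - φ (Ξ 0)) (Ξ 0 + φ (Ξ 0)) ∪
      ⋃ n ∈ Finset.range (n₀ + 1),
        Set.Ioo (Ξ (min (ζ n) 1) - φ (Ξ (min (ζ n) 1)))
                (Ξ (min (ζ n) 1) + φ (Ξ (min (ζ n) 1))) := by
  have hpos : ∀ n, 0 < ζ n := by
    intro n
    induction n with
    | zero =>
      rw [hζ0]
      have h := hcov 0 ⟨le_refl 0, zero_le_one⟩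
      linarith [h.2]
    | succ n ih =>
      rw [hζS]
      have hm : min (ζ n) 1 ∈ Set.Icc (0:ℝ) 1 :=
        ⟨le_min ih.le zero_le_one, min_le_right _ _⟩
      have h := hcov _ hm
      have hm0 : (0:ℝ) < min (ζ n) 1 := lt_min ih one_pos
      linarith [h.2]
  intro x hx
  have key : ∀ n, n ≤ n₀ → x ≤ min (ζ n) 1 →
      x ∈ Set.Ioo (Ξ 0 - φ (Ξ 0)) (Ξ 0 + φ (Ξ 0)) ∪
      ⋃ n ∈ Finset.range (n₀ + 1),
        Set.Ioo (Ξ (min (ζ n) 1) - φ (Ξ (min (ζ n) 1)))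
                (Ξ (min (ζ n) 1) + φ (Ξ (min (ζ n) 1))) := by
    intro n
    induction n with
    | zero =>
      intro hle hxle
      have h0 := hcov 0 ⟨le_refl 0, zero_le_one⟩
      rcases lt_or_eq_of_le hxle with hlt | heq
      · left
        exact ⟨lt_of_lt_of_le h0.1 hx.1,
          lt_of_lt_of_le hlt ((min_le_left _ _).trans hζ0.le)⟩
      · right
        have hm : min (ζ 0) 1 ∈ Set.Icc (0:ℝ) 1 :=
          ⟨le_min (hpos 0).le zero_le_one, min_le_right _ _⟩
        have h := hcov _ hm
        simp only [Set.mem_iUnion, Finset.mem_range]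
        exact ⟨0, Nat.succ_pos _, heq ▸ h⟩
    | succ n ih =>
      intro hle hxle
      rcases le_or_gt x (min (ζ n) 1) with h1 | h1
      · exact ih (Nat.le_of_succ_le hle) h1
      · have hm : min (ζ n) 1 ∈ Set.Icc (0:ℝ) 1 :=
          ⟨le_min (hpos n).le zero_le_one, min_le_right _ _⟩
        have h := hcov _ hm
        rcases lt_or_eq_of_le hxle with hlt | heq
        · right
          simp only [Set.mem_iUnion, Finset.mem_range]
          refine ⟨n, Nat.lt_succ_of_lt (Nat.lt_of_succ_le hle), ?_⟩
          constructor
          · linarith [h.1]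
          · rw [← hζS]
            exact lt_of_lt_of_le hlt ((min_le_left _ _))
        · right
          have hm' : min (ζ (n+1)) 1 ∈ Set.Icc (0:ℝ) 1 :=
            ⟨le_min (hpos (n+1)).le zero_le_one, min_le_right _ _⟩
          have h' := hcov _ hm'
          simp only [Set.mem_iUnion, Finset.mem_range]
          exact ⟨n + 1, Nat.succ_lt_succ (Nat.lt_of_succ_le hle), heq ▸ h'⟩
  exact key n₀ (le_refl _) (le_min (hx.2.trans hn₀) hx.2)
end

section
/- Let Ξ : [0,1] → [0,1] and φ : [0,1] → ℝ satisfy x ∈ (Ξ(x) − φ(Ξ(x)), Ξ(x) + φ(Ξ(x))) for all x ∈ [0,1], and define ζ(0) := Ξ(0) + φ(Ξ(0)), ζ(n+1) := Ξ(ζ(n)) + φ(Ξ(ζ(n))) (assuming all ζ(n) ∈ [0,1]). Suppose the strictly increasing sequence ζ is bounded above in [0,1], with supremum x₀. Then the family of intervals {(y − φ(y), y + φ(y)) : y ∈ [0,1]} is not locally finite at x₀: every neighbourhood of x₀ meets infinitely many distinct nonempty intervals of the family. -/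
theorem bounded_sweep_not_locally_finite
    (Ξ : ℝ → ℝ) (φ : ℝ → ℝ)
    (hΞ : ∀ x ∈ Set.Icc (0:ℝ) 1, Ξ x ∈ Set.Icc (0:ℝ) 1)
    (hcov : ∀ x ∈ Set.Icc (0:ℝ) 1,
      x ∈ Set.Ioo (Ξ x - φ (Ξ x)) (Ξ x + φ (Ξ x)))
    (ζ : ℕ → ℝ)
    (hζ0 : ζ 0 = Ξ 0 + φ (Ξ 0))
    (hζS : ∀ n : ℕ, ζ (n + 1) = Ξ (ζ n) + φ (Ξ (ζ n)))
    (hζmem : ∀ n, ζ n ∈ Set.Icc (0:ℝ) 1)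
    (hmono : StrictMono ζ)
    (x₀ : ℝ) (hx₀ : IsLUB (Set.range ζ) x₀) (hx₀mem : x₀ ∈ Set.Icc (0:ℝ) 1) :
    ∀ V ∈ nhds x₀,
      {S : Set ℝ | (∃ y ∈ Set.Icc (0:ℝ) 1, S = Set.Ioo (y - φ y) (y + φ y)) ∧
        S.Nonempty ∧ (S ∩ V).Nonempty}.Infinite := by
  intro V hV
  obtain ⟨ε, hε, hball⟩ := Metric.mem_nhds_iff.mp hV
  have hub : ∀ n, ζ n ≤ x₀ := fun n => hx₀.1 ⟨n, rfl⟩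
  obtain ⟨N, hzN⟩ : ∃ N, x₀ - ε < ζ N := by
    by_contra h
    push_neg at h
    have : x₀ ≤ x₀ - ε := hx₀.2 (by rintro z ⟨n, rfl⟩; exact h n)
    linarith
  -- interval around ζ n
  have hI : ∀ n, ζ n ∈ Set.Ioo (Ξ (ζ n) - φ (Ξ (ζ n))) (Ξ (ζ n) + φ (Ξ (ζ n))) :=
    fun n => hcov (ζ n) (hζmem n)
  have hlt : ∀ n, Ξ (ζ n) - φ (Ξ (ζ n)) < Ξ (ζ n) + φ (Ξ (ζ n)) :=
    fun n => lt_trans (hI n).1 (hI n).2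
  apply Set.infinite_of_injective_forall_mem
    (f := fun k : ℕ => Set.Ioo (Ξ (ζ (N + k)) - φ (Ξ (ζ (N + k)))) (Ξ (ζ (N + k)) + φ (Ξ (ζ (N + k)))))
  · intro j k h
    simp only at h
    have e : Ξ (ζ (N + j)) + φ (Ξ (ζ (N + j))) = Ξ (ζ (N + k)) + φ (Ξ (ζ (N + k))) := by
      have := congrArg sSup h
      rwa [csSup_Ioo (hlt (N + j)), csSup_Ioo (hlt (N + k))] at this
    have e2 : ζ (N + j + 1) = ζ (N + k + 1) := by rw [hζS, hζS, e]
    have := hmono.injective e2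
    omega
  · intro k
    refine ⟨⟨Ξ (ζ (N + k)), hΞ _ (hζmem _), rfl⟩, ⟨ζ (N + k), hI (N + k)⟩,
      ⟨ζ (N + k), hI (N + k), hball ?_⟩⟩
    have h1 : x₀ - ε < ζ (N + k) := lt_of_lt_of_le hzN (hmono.monotone (Nat.le_add_right N k))
    have h2 : ζ (N + k) ≤ x₀ := hub _
    simp only [Metric.mem_ball, Real.dist_eq, abs_lt]
    constructor <;> linarith
end
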